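/- Let L : ℝⁿ × ℝⁿ → ℝ be C² and let q : [0, h] → ℝⁿ be a C² solution of the Euler–Lagrange equations for L with (q(0), q̇(0)) in a set on which L and its derivatives are bounded. Then the midpoint discrete Lagrangian satisfies |h·L((q(0)+q(h))/2, (q(h)−q(0))/h) − ∫₀ʰ L(q(t), q̇(t)) dt| ≤ C·h³ for a constant C independent of h, i.e., the midpoint rule has variational order at least 2 (in particular, it is consistent). -/

import Mathlib

open Set
open scoped NNReal

/-!
Write `γ t = (q t, q̇ t)` and `m = h / 2`. The midpoint discrete Lagrangian evaluates `L` at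
`(midpoint (q 0) (q h), slope q 0 h)`, which is `O(h²)`-close to `γ m`: the midpoint of the end
values by a first-order Taylor expansion about `m`, and the slope because it is the mean of `q̇`
over `[0, h]`, so that its distance to `q̇ m` is a midpoint-rule error for `q̇`. As `L` is `C¹`, it
is Lipschitz on a bounded neighbourhood of `γ '' [0, 1]`, so replacing that point by `γ m` costs
`O(h³)` after multiplying by `h`. Finally `h · L (γ m)` is the midpoint rule for `∫₀ʰ L ∘ γ`, whose
error is `O(h³)` because `L ∘ γ` is `C²` and the linear Taylor term about the midpoint integrates
to zero.
-/

section Taylor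

variable {E : Type*} [NormedAddCommGroup E] [NormedSpace ℝ E]

theorem norm_taylor_remainder_one_le {f : ℝ → E} (hf : ContDiff ℝ 2 f) {B m x : ℝ}
    (hB : ∀ t ∈ uIcc m x, ‖deriv (deriv f) t‖ ≤ B) :
    ‖f x - f m - (x - m) • deriv f m‖ ≤ B * (x - m) ^ 2 := by
  have hf' : Differentiable ℝ (deriv f) := (hf.deriv' (n := 1)).differentiable one_ne_zero
  have hB0 : 0 ≤ B := (norm_nonneg _).trans (hB m left_mem_uIcc)
  have hderiv_bound : ∀ t ∈ uIcc m x, ‖deriv f t - deriv f m‖ ≤ B * |x - m| := fun t ht =>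
    calc ‖deriv f t - deriv f m‖ ≤ B * ‖t - m‖ :=
          (convex_uIcc m x).norm_image_sub_le_of_norm_hasDerivWithin_le
            (fun y _ => (hf' y).hasDerivAt.hasDerivWithinAt) hB left_mem_uIcc ht
      _ ≤ B * |x - m| := mul_le_mul_of_nonneg_left (abs_sub_left_of_mem_uIcc ht) hB0
  have hremainder : ∀ t, HasDerivAt (fun y => f y - f m - (y - m) • deriv f m)
      (deriv f t - deriv f m) t := fun t => by
    have := ((hf.differentiable two_ne_zero t).hasDerivAt.sub_const (f m)).sub
      (((hasDerivAt_id t).sub_const m).smul_const (deriv f m))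
    rwa [one_smul] at this
  have := (convex_uIcc m x).norm_image_sub_le_of_norm_hasDerivWithin_le
    (fun t _ => (hremainder t).hasDerivWithinAt) hderiv_bound left_mem_uIcc right_mem_uIcc
  calc ‖f x - f m - (x - m) • deriv f m‖ ≤ B * |x - m| * ‖x - m‖ := by simpa using this
    _ = B * (x - m) ^ 2 := by rw [Real.norm_eq_abs, mul_assoc, abs_mul_abs_self, sq]

theorem norm_midpoint_sub_image_midpoint_le {f : ℝ → E} (hf : ContDiff ℝ 2 f) {a b B : ℝ}
    (hab : a ≤ b) (hB : ∀ t ∈ Icc a b, ‖deriv (deriv f) t‖ ≤ B) :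
    ‖midpoint ℝ (f a) (f b) - f ((a + b) / 2)‖ ≤ B / 4 * (b - a) ^ 2 := by
  set m := (a + b) / 2 with hm_def
  have hm : m ∈ Icc a b := ⟨by linarith, by linarith⟩
  have ha := norm_taylor_remainder_one_le hf (x := a)
    fun t ht => hB t (uIcc_subset_Icc hm (left_mem_Icc.2 hab) ht)
  have hb := norm_taylor_remainder_one_le hf (x := b)
    fun t ht => hB t (uIcc_subset_Icc hm (right_mem_Icc.2 hab) ht)
  have hsplit : midpoint ℝ (f a) (f b) - f m = (2 : ℝ)⁻¹ •
      ((f a - f m - (a - m) • deriv f m) + (f b - f m - (b - m) • deriv f m)) := by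
    rw [midpoint_eq_smul_add, invOf_eq_inv]
    module
  calc ‖midpoint ℝ (f a) (f b) - f m‖
      ≤ 2⁻¹ * (B * (a - m) ^ 2 + B * (b - m) ^ 2) := by
        rw [hsplit, norm_smul, Real.norm_of_nonneg (by norm_num)]
        gcongr
        exact (norm_add_le _ _).trans (add_le_add ha hb)
    _ = B / 4 * (b - a) ^ 2 := by ring

theorem norm_integral_sub_smul_image_midpoint_le [CompleteSpace E] {f : ℝ → E}
    (hf : ContDiff ℝ 2 f) {a b B : ℝ} (hab : a ≤ b)
    (hB : ∀ t ∈ Icc a b, ‖deriv (deriv f) t‖ ≤ B) :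
    ‖(∫ t in a..b, f t) - (b - a) • f ((a + b) / 2)‖ ≤ B / 4 * (b - a) ^ 3 := by
  set m := (a + b) / 2 with hm_def
  have hm : m ∈ Icc a b := ⟨by linarith, by linarith⟩
  have hB0 : 0 ≤ B := (norm_nonneg _).trans (hB m hm)
  have hf_int : IntervalIntegrable f MeasureTheory.volume a b :=
    hf.continuous.intervalIntegrable a b
  have hremainder_integral : ∫ t in a..b, (f t - f m - (t - m) • deriv f m)
      = (∫ t in a..b, f t) - (b - a) • f m := by
    have hodd : ∫ t in a..b, (t - m) = 0 := by simp [m, integral_id]; ring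
    rw [intervalIntegral.integral_sub (hf_int.sub intervalIntegrable_const)
        ((by fun_prop : Continuous fun t : ℝ => (t - m) • deriv f m).intervalIntegrable a b),
      intervalIntegral.integral_smul_const, hodd, zero_smul, sub_zero,
      intervalIntegral.integral_sub hf_int intervalIntegrable_const, intervalIntegral.integral_const]
  have hbound : ∀ t ∈ uIoc a b, ‖f t - f m - (t - m) • deriv f m‖ ≤ B / 4 * (b - a) ^ 2 := by
    intro t ht
    have ht' : t ∈ Icc a b := uIcc_of_le hab ▸ uIoc_subset_uIcc ht
    calc ‖f t - f m - (t - m) • deriv f m‖ ≤ B * (t - m) ^ 2 :=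
          norm_taylor_remainder_one_le hf fun s hs => hB s (uIcc_subset_Icc hm ht' hs)
      _ ≤ B * ((b - a) / 2) ^ 2 := by
          have hdist : (t - m) ^ 2 ≤ ((b - a) / 2) ^ 2 := by nlinarith [ht'.1, ht'.2]
          gcongr
      _ = B / 4 * (b - a) ^ 2 := by ring
  have := intervalIntegral.norm_integral_le_of_norm_le_const hbound
  rw [hremainder_integral, abs_of_nonneg (sub_nonneg.2 hab)] at this
  linarith

theorem norm_slope_sub_deriv_midpoint_le [CompleteSpace E] {f : ℝ → E} (hf : ContDiff ℝ 3 f)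
    {a b B : ℝ} (hab : a < b) (hB : ∀ t ∈ Icc a b, ‖deriv (deriv (deriv f)) t‖ ≤ B) :
    ‖slope f a b - deriv f ((a + b) / 2)‖ ≤ B / 4 * (b - a) ^ 2 := by
  set m := (a + b) / 2
  have hf' : ContDiff ℝ 2 (deriv f) := hf.deriv'
  have hba : 0 < b - a := sub_pos.2 hab
  have hftc : ∫ t in a..b, deriv f t = f b - f a :=
    intervalIntegral.integral_deriv_eq_sub
      (fun x _ => (hf.differentiable three_ne_zero).differentiableAt)
      (hf'.continuous.intervalIntegrable a b)
  have hslope : slope f a b - deriv f m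
      = (b - a)⁻¹ • ((∫ t in a..b, deriv f t) - (b - a) • deriv f m) := by
    rw [hftc, slope_def_module, smul_sub (b - a)⁻¹ (f b - f a), smul_smul,
      inv_mul_cancel₀ hba.ne', one_smul]
  calc ‖slope f a b - deriv f m‖ ≤ (b - a)⁻¹ * (B / 4 * (b - a) ^ 3) := by
        rw [hslope, norm_smul, norm_inv, Real.norm_of_nonneg hba.le]
        gcongr
        exact norm_integral_sub_smul_image_midpoint_le hf' hab.le hB
    _ = B / 4 * (b - a) ^ 2 := by field_simp

theorem exists_norm_integral_sub_smul_half_le [CompleteSpace E] {f : ℝ → E}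
    (hf : ContDiff ℝ 2 f) :
    ∃ C, ∀ h ∈ Ioc (0 : ℝ) 1, ‖(∫ t in 0..h, f t) - h • f (h / 2)‖ ≤ C * h ^ 3 := by
  obtain ⟨B, hB⟩ := (isCompact_Icc (a := (0 : ℝ)) (b := 1)).exists_bound_of_continuousOn
    (hf.deriv'.continuous_deriv le_rfl).continuousOn
  refine ⟨B / 4, fun h hh => ?_⟩
  simpa using norm_integral_sub_smul_image_midpoint_le hf hh.1.le
    fun t ht => hB t (Icc_subset_Icc_right hh.2 ht)

theorem exists_norm_midpoint_slope_sub_le [CompleteSpace E] {q : ℝ → E} (hq : ContDiff ℝ 3 q) :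
    ∃ C, ∀ h ∈ Ioc (0 : ℝ) 1,
      ‖(midpoint ℝ (q 0) (q h), slope q 0 h) - (q (h / 2), deriv q (h / 2))‖ ≤ C * h ^ 2 := by
  obtain ⟨B₂, hB₂⟩ := (isCompact_Icc (a := (0 : ℝ)) (b := 1)).exists_bound_of_continuousOn
    (hq.deriv'.continuous_deriv one_le_two).continuousOn
  obtain ⟨B₃, hB₃⟩ := (isCompact_Icc (a := (0 : ℝ)) (b := 1)).exists_bound_of_continuousOn
    (hq.deriv'.deriv'.continuous_deriv le_rfl).continuousOn
  refine ⟨max (B₂ / 4) (B₃ / 4), fun h hh => ?_⟩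
  have hsub : Icc 0 h ⊆ Icc 0 1 := Icc_subset_Icc_right hh.2
  have hmid := norm_midpoint_sub_image_midpoint_le (hq.of_le (by norm_num)) hh.1.le
    fun t ht => hB₂ t (hsub ht)
  have hslope := norm_slope_sub_deriv_midpoint_le hq hh.1 fun t ht => hB₃ t (hsub ht)
  simp only [zero_add, sub_zero] at hmid hslope
  rw [Prod.mk_sub_mk, Prod.norm_mk]
  exact max_le (hmid.trans (by gcongr; exact le_max_left _ _))
    (hslope.trans (by gcongr; exact le_max_right _ _))

end Taylor

theorem ContDiff.exists_norm_sub_le_of_isBounded {X F : Type*} [NormedAddCommGroup X]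
    [NormedSpace ℝ X] [ProperSpace X] [NormedAddCommGroup F] [NormedSpace ℝ F] {L : X → F}
    (hL : ContDiff ℝ 1 L) {S : Set X} (hS : Bornology.IsBounded S) (r : ℝ) :
    ∃ K : ℝ≥0, ∀ x ∈ S, ∀ y, ‖y - x‖ ≤ r → ‖L y - L x‖ ≤ K * ‖y - x‖ := by
  obtain ⟨R, hR⟩ := hS.subset_closedBall 0
  obtain ⟨K, hK⟩ := hL.contDiffOn.exists_lipschitzOnWith one_ne_zero
    (convex_closedBall 0 (R + r)) (isCompact_closedBall 0 (R + r))
  refine ⟨K, fun x hx y hy => hK.norm_sub_le ?_ ?_⟩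
  · have hx' := mem_closedBall_zero_iff.1 (hR hx)
    rw [mem_closedBall_zero_iff]
    linarith [norm_le_norm_sub_add y x]
  · have hr : 0 ≤ r := (norm_nonneg _).trans hy
    rw [mem_closedBall_zero_iff]
    linarith [mem_closedBall_zero_iff.1 (hR hx)]

theorem midpoint_variational_order_general (n : ℕ)
    (L : ((Fin n → ℝ) × (Fin n → ℝ)) → ℝ) (hL : ContDiff ℝ 2 L)
    (q : ℝ → (Fin n → ℝ)) (hq : ContDiff ℝ 3 q) :
    ∃ C : ℝ, ∀ h : ℝ, 0 < h → h ≤ 1 →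
      |h * L ((fun i => (q 0 i + q h i)/2), (fun i => (q h i - q 0 i)/h))
        - ∫ t in (0:ℝ)..h, L (q t, deriv q t)| ≤ C * h^3 := by
  set γ : ℝ → (Fin n → ℝ) × (Fin n → ℝ) := fun t => (q t, deriv q t)
  have hγ : ContDiff ℝ 2 γ := (hq.of_le (by norm_num)).prodMk hq.deriv'
  obtain ⟨C₁, hC₁⟩ := exists_norm_midpoint_slope_sub_le hq
  have hC₁_nonneg : 0 ≤ C₁ := by simpa using (norm_nonneg _).trans (hC₁ 1 ⟨one_pos, le_rfl⟩)
  obtain ⟨K, hK⟩ := (hL.of_le one_le_two).exists_norm_sub_le_of_isBounded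
    (isCompact_Icc.image hγ.continuous).isBounded C₁ (S := γ '' Icc 0 1)
  obtain ⟨C₂, hC₂⟩ := exists_norm_integral_sub_smul_half_le (hL.comp hγ)
  refine ⟨K * C₁ + C₂, fun h h0 h1 => ?_⟩
  have hh : h ∈ Ioc 0 1 := ⟨h0, h1⟩
  set P := (midpoint ℝ (q 0) (q h), slope q 0 h)
  have hP : ((fun i => (q 0 i + q h i) / 2), (fun i => (q h i - q 0 i) / h)) = P := by
    ext i <;> simp [P, midpoint_eq_smul_add, slope_def_module] <;> ring
  have hPγ : ‖P - γ (h / 2)‖ ≤ C₁ * h ^ 2 := hC₁ h hh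
  have hL_sub : |L P - L (γ (h / 2))| ≤ K * (C₁ * h ^ 2) := by
    have hclose : ‖P - γ (h / 2)‖ ≤ C₁ :=
      hPγ.trans (mul_le_of_le_one_right hC₁_nonneg (pow_le_one₀ h0.le h1))
    calc |L P - L (γ (h / 2))| ≤ K * ‖P - γ (h / 2)‖ :=
          hK _ (mem_image_of_mem γ ⟨by linarith, by linarith⟩) _ hclose
      _ ≤ K * (C₁ * h ^ 2) := by gcongr
  have hquad : |h * L (γ (h / 2)) - ∫ t in (0 : ℝ)..h, L (γ t)| ≤ C₂ * h ^ 3 := by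
    rw [abs_sub_comm]
    simpa using hC₂ h hh
  rw [hP]
  calc |h * L P - ∫ t in (0 : ℝ)..h, L (γ t)|
      = |h * (L P - L (γ (h / 2))) + (h * L (γ (h / 2)) - ∫ t in (0 : ℝ)..h, L (γ t))| := by
        ring_nf
    _ ≤ h * (K * (C₁ * h ^ 2)) + C₂ * h ^ 3 := by
        refine (abs_add_le _ _).trans (add_le_add ?_ hquad)
        rw [abs_mul, abs_of_pos h0]
        gcongr
    _ = (K * C₁ + C₂) * h ^ 3 := by ring

/-- The midpoint discrete Lagrangian approximates the exact discrete Lagrangian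
to third order in the step size along a C³ solution of the Euler–Lagrange
equations (variational order at least 2). -/
theorem midpoint_variational_order (n : ℕ)
    (L : ((Fin n → ℝ) × (Fin n → ℝ)) → ℝ) (hL : ContDiff ℝ 2 L)
    (q : ℝ → (Fin n → ℝ)) (hq : ContDiff ℝ 3 q)
    (hEL : ∀ i : Fin n, ∀ t : ℝ,
      deriv (fun x => L (Function.update (q t) i x, deriv q t)) (q t i)
        - deriv (fun u => deriv (fun x => L (q u, Function.update (deriv q u) i x))
            (deriv q u i)) t = 0) :
    ∃ C : ℝ, ∀ h : ℝ, 0 < h → h ≤ 1 →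
      |h * L ((fun i => (q 0 i + q h i)/2), (fun i => (q h i - q 0 i)/h))
        - ∫ t in (0:ℝ)..h, L (q t, deriv q t)| ≤ C * h^3 :=
  midpoint_variational_order_general n L hL q hq
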